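/- Let Θ be a 2-form, α a complex 1-form, and η a real 1-form on a (2n+1)-manifold with n ≥ 2, satisfying dα ∧ η = Θ ∧ η and dη = (α+ᾱ) ∧ η. Set Ω = iΘ − (1/n) iα ∧ ᾱ. Then d(Ω^{n−1} ∧ iα ∧ η) = (n−1) Ω^{n−2} ∧ (1/n) iΘ ∧ iα ∧ ᾱ ∧ η + Ω^{n−1} ∧ (iΘ − iα ∧ ᾱ) ∧ η. -/

import Mathlib

/-- An abstract calculus of smooth complex-valued differential forms on a compact
oriented smooth manifold (all degrees collected in one algebra `A`, with the
grading recorded by the predicate `deg`): wedge product is `*`, `d` is the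
exterior derivative, `conj` is complex conjugation of forms, `integral` is
integration of top-degree forms over the compact oriented manifold (so that
Stokes' theorem holds), `pos` singles out the positive volume forms, and
`nonvanishing` the nowhere-vanishing forms. -/
structure FormCalculus where
  A : Type
  [ring : Ring A]
  [alg : Algebra ℂ A]
  deg : ℕ → A → Prop
  d : A → A
  conj : A → A
  integral : A → ℂ
  pos : A → Prop
  nonvanishing : A → Prop
  deg_add : ∀ (k : ℕ) (a b : A), deg k a → deg k b → deg k (a + b)
  deg_smul : ∀ (k : ℕ) (c : ℂ) (a : A), deg k a → deg k (c • a)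
  deg_mul : ∀ (j k : ℕ) (a b : A), deg j a → deg k b → deg (j + k) (a * b)
  deg_d : ∀ (k : ℕ) (a : A), deg k a → deg (k + 1) (d a)
  d_add : ∀ a b : A, d (a + b) = d a + d b
  d_smul : ∀ (c : ℂ) (a : A), d (c • a) = c • d a
  d_d : ∀ a : A, d (d a) = 0
  leibniz : ∀ (j : ℕ) (a b : A), deg j a →
    d (a * b) = d a * b + ((-1 : ℂ) ^ j) • (a * d b)
  comm : ∀ (j k : ℕ) (a b : A), deg j a → deg k b →
    a * b = ((-1 : ℂ) ^ (j * k)) • (b * a)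
  conj_add : ∀ a b : A, conj (a + b) = conj a + conj b
  conj_smul : ∀ (c : ℂ) (a : A), conj (c • a) = (starRingEnd ℂ c) • conj a
  conj_mul : ∀ a b : A, conj (a * b) = conj a * conj b
  conj_conj : ∀ a : A, conj (conj a) = a
  conj_d : ∀ a : A, conj (d a) = d (conj a)
  integral_add : ∀ a b : A, integral (a + b) = integral a + integral b
  integral_smul : ∀ (c : ℂ) (a : A), integral (c • a) = c * integral a
  /-- Stokes' theorem on the compact manifold without boundary. -/
  stokes : ∀ a : A, integral (d a) = 0
  /-- A positive volume form has positive total integral. -/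
  pos_integral : ∀ a : A, pos a → 0 < (integral a).re

attribute [instance] FormCalculus.ring FormCalculus.alg

/-!
Write `K = α ∧ ᾱ`, so that `Ω = iΘ - (i/n) K`. Since `ᾱ ∧ η = dη - α ∧ η` and `α ∧ α = 0`,
left multiplication by `K` kills `Θ^l ∧ α ∧ η` and `Θ^l ∧ α ∧ dη` and sends `Θ^l ∧ η` to
`Θ^l ∧ α ∧ dη`. As `Θ` commutes with `α`, `η` and `dη`, the powers of `Ω` on these forms are
given by a binomial expansion in which `K` occurs at most once. Differentiating
`dα ∧ η = Θ ∧ η` gives `dΘ ∧ α ∧ η = 0`, hence `d(Θ^j ∧ α ∧ η) = Θ^(j+1) ∧ η - Θ^j ∧ α ∧ dη`,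
and both sides of the identity become combinations of `Θ^n ∧ η` and `Θ^(n-1) ∧ α ∧ dη`
with the same coefficients.
-/

section NilpotentPerturbation

variable {R A : Type*} [CommSemiring R] [Semiring A] [Algebra R A] (a b : R) {T N : A}

theorem smul_add_smul_pow_mul_of_mul_eq_zero {x : A} (hx : ∀ l, N * (T ^ l * x) = 0)
    (j l : ℕ) : (a • T + b • N) ^ j * (T ^ l * x) = a ^ j • (T ^ (j + l) * x) := by
  induction j generalizing l with
  | zero => simp
  | succ j ih =>
    rw [pow_succ, mul_assoc, add_mul, smul_mul_assoc, smul_mul_assoc, hx, smul_zero,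
      add_zero, ← mul_assoc, ← pow_succ', mul_smul_comm, ih, smul_smul, ← pow_succ',
      show j + (l + 1) = j + 1 + l by omega]

theorem smul_add_smul_pow_succ_mul {y z : A} (hy : ∀ l, N * (T ^ l * y) = T ^ l * z)
    (hz : ∀ l, N * (T ^ l * z) = 0) (j l : ℕ) :
    (a • T + b • N) ^ (j + 1) * (T ^ l * y)
      = a ^ (j + 1) • (T ^ (j + 1 + l) * y) + (((j : R) + 1) * a ^ j * b) • (T ^ (j + l) * z) := by
  induction j generalizing l with
  | zero =>
    rw [pow_one, add_mul, smul_mul_assoc, smul_mul_assoc, hy, ← mul_assoc, ← pow_succ']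
    simp [add_comm l]
  | succ j ih =>
    rw [pow_succ, mul_assoc, add_mul, smul_mul_assoc, smul_mul_assoc, hy, ← mul_assoc,
      ← pow_succ', mul_add, mul_smul_comm, mul_smul_comm, ih,
      smul_add_smul_pow_mul_of_mul_eq_zero a b hz]
    push_cast
    rw [show j + 1 + (l + 1) = j + 1 + 1 + l by omega, show j + (l + 1) = j + 1 + l by omega]
    module

end NilpotentPerturbation

namespace FormCalculus

variable {S : FormCalculus}

theorem eq_zero_of_eq_neg {x : S.A} (h : x = -x) : x = 0 := by
  have h2 : (2 : ℂ) • x = 0 := by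
    rw [two_smul]
    nth_rewrite 2 [h]
    exact add_neg_cancel x
  simpa using h2

theorem conj_zero : S.conj 0 = 0 := by
  simpa using S.conj_smul 0 0

theorem commute_of_even {j k : ℕ} {a b : S.A} (ha : S.deg j a) (hb : S.deg k b)
    (h : Even (j * k)) : Commute a b := by
  have hab := S.comm j k a b ha hb
  rwa [h.neg_one_pow, one_smul] at hab

theorem mul_eq_neg_mul_of_odd {j k : ℕ} {a b : S.A} (ha : S.deg j a) (hb : S.deg k b)
    (h : Odd (j * k)) : a * b = -(b * a) := by
  rw [S.comm j k a b ha hb, h.neg_one_pow, neg_one_smul]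

theorem mul_self_eq_zero_of_odd {k : ℕ} {a : S.A} (ha : S.deg k a) (hk : Odd k) :
    a * a = 0 :=
  eq_zero_of_eq_neg (mul_eq_neg_mul_of_odd ha ha (hk.mul hk))

theorem d_mul_of_even {k : ℕ} {a : S.A} (hk : Even k) (ha : S.deg k a) (b : S.A) :
    S.d (a * b) = S.d a * b + a * S.d b := by
  rw [S.leibniz k a b ha, hk.neg_one_pow, one_smul]

theorem d_mul_of_odd {k : ℕ} {a : S.A} (hk : Odd k) (ha : S.deg k a) (b : S.A) :
    S.d (a * b) = S.d a * b - a * S.d b := by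
  rw [S.leibniz k a b ha, hk.neg_one_pow, neg_one_smul, sub_eq_add_neg]

theorem d_pow_mul_of_d_mul_eq_zero {k : ℕ} {θ x : S.A} (hk : Even k) (hθ : S.deg k θ)
    (hx : S.d θ * x = 0) (j : ℕ) : S.d (θ ^ j * x) = θ ^ j * S.d x := by
  have hcomm : Commute θ (S.d θ) :=
    commute_of_even hθ (S.deg_d k θ hθ) (Nat.even_mul_succ_self k)
  induction j with
  | zero => simp
  | succ j ih =>
    rw [pow_succ', mul_assoc, d_mul_of_even hk hθ, ih, ← mul_assoc (S.d θ),
      ← (hcomm.pow_left j).eq, mul_assoc, hx, mul_zero, zero_add, mul_assoc]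

variable {α η Θ : S.A}

theorem conj_mul_eq (e2 : S.d η = (α + S.conj α) * η) : S.conj α * η = S.d η - α * η := by
  rw [e2, add_mul, add_sub_cancel_left]

theorem mul_conj_mul_eq (hα : S.deg 1 α) (e2 : S.d η = (α + S.conj α) * η) :
    α * S.conj α * η = α * S.d η := by
  rw [mul_assoc, conj_mul_eq e2, mul_sub, ← mul_assoc, mul_self_eq_zero_of_odd hα odd_one,
    zero_mul, sub_zero]

theorem conj_mul_d_eq (hα : S.deg 1 α) (hη : S.deg 1 η) (e2 : S.d η = (α + S.conj α) * η) :
    S.conj α * S.d η = -(α * S.d η) := by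
  have hαα := mul_self_eq_zero_of_odd hα odd_one
  have hconj : S.conj α * S.conj α = 0 := by rw [← S.conj_mul, hαα, conj_zero]
  calc S.conj α * S.d η = S.conj α * (α * η) := by
        rw [e2, add_mul, mul_add, ← mul_assoc (S.conj α) (S.conj α), hconj, zero_mul, add_zero]
    _ = -((S.conj α * η) * α) := by
        rw [mul_eq_neg_mul_of_odd hα hη odd_one, mul_neg, mul_assoc]
    _ = -(α * S.d η) := by
        rw [conj_mul_eq e2, sub_mul, mul_assoc, mul_eq_neg_mul_of_odd hη hα odd_one, mul_neg,
          ← mul_assoc, hαα, zero_mul, neg_zero, sub_zero,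
          (commute_of_even hα (S.deg_d 1 η hη) even_two).eq]

theorem mul_conj_mul_d_eq_zero (hα : S.deg 1 α) (hη : S.deg 1 η)
    (e2 : S.d η = (α + S.conj α) * η) : α * S.conj α * S.d η = 0 := by
  rw [mul_assoc, conj_mul_d_eq hα hη e2, mul_neg, ← mul_assoc,
    mul_self_eq_zero_of_odd hα odd_one, zero_mul, neg_zero]

theorem mul_conj_mul_pow_mul_mul_eq_zero (hα : S.deg 1 α) (hη : S.deg 1 η) (hΘ : S.deg 2 Θ)
    (e2 : S.d η = (α + S.conj α) * η) (l : ℕ) : α * S.conj α * (Θ ^ l * (α * η)) = 0 := by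
  have hΘη : Commute (Θ ^ l) η := (commute_of_even hΘ hη (by decide)).pow_left l
  have hα_dη_Θ : Commute α (S.d η * Θ ^ l) :=
    (commute_of_even hα (S.deg_d 1 η hη) (by decide)).mul_right
      ((commute_of_even hα hΘ (by decide)).pow_right l)
  have hmove : Θ ^ l * (α * η) = -(η * (Θ ^ l * α)) := by
    rw [mul_eq_neg_mul_of_odd hα hη odd_one, mul_neg, ← mul_assoc, hΘη.eq, mul_assoc]
  rw [hmove, mul_neg, ← mul_assoc, mul_conj_mul_eq hα e2, ← mul_assoc, mul_assoc α,
    hα_dη_Θ.eq, mul_assoc, mul_self_eq_zero_of_odd hα odd_one, mul_zero, neg_zero]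

theorem mul_conj_mul_pow_mul_eq (hα : S.deg 1 α) (hη : S.deg 1 η) (hΘ : S.deg 2 Θ)
    (e2 : S.d η = (α + S.conj α) * η) (l : ℕ) :
    α * S.conj α * (Θ ^ l * η) = Θ ^ l * (α * S.d η) := by
  have hΘη : Commute (Θ ^ l) η := (commute_of_even hΘ hη (by decide)).pow_left l
  have hα_dη_Θ : Commute (α * S.d η) (Θ ^ l) :=
    ((commute_of_even hα hΘ (by decide)).mul_left
      (commute_of_even (S.deg_d 1 η hη) hΘ (by decide))).pow_right l
  rw [hΘη.eq, ← mul_assoc, mul_conj_mul_eq hα e2, hα_dη_Θ.eq]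

theorem mul_conj_mul_pow_mul_mul_d_eq_zero (hα : S.deg 1 α) (hη : S.deg 1 η)
    (hΘ : S.deg 2 Θ) (e2 : S.d η = (α + S.conj α) * η) (l : ℕ) :
    α * S.conj α * (Θ ^ l * (α * S.d η)) = 0 := by
  have hΘα_dη : Commute (Θ ^ l * α) (S.d η) :=
    ((commute_of_even hΘ (S.deg_d 1 η hη) (by decide)).pow_left l).mul_left
      (commute_of_even hα (S.deg_d 1 η hη) (by decide))
  rw [← mul_assoc (Θ ^ l), hΘα_dη.eq, ← mul_assoc, mul_conj_mul_d_eq_zero hα hη e2, zero_mul]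

theorem d_mul_eq (hα : S.deg 1 α) (e1 : S.d α * η = Θ * η) :
    S.d (α * η) = Θ * η - α * S.d η := by
  rw [d_mul_of_odd odd_one hα, e1]

theorem d_mul_eq_d_mul_d_sub (hα : S.deg 1 α) (hΘ : S.deg 2 Θ) (e1 : S.d α * η = Θ * η) :
    S.d Θ * η = S.d α * S.d η - Θ * S.d η := by
  have h := congrArg S.d e1
  rw [d_mul_of_even even_two (S.deg_d 1 α hα), d_mul_of_even even_two hΘ, S.d_d, zero_mul,
    zero_add] at h
  rw [h, add_sub_cancel_right]

theorem mul_d_mul_d_eq (hα : S.deg 1 α) (hη : S.deg 1 η) (hΘ : S.deg 2 Θ)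
    (e1 : S.d α * η = Θ * η) (e2 : S.d η = (α + S.conj α) * η) :
    α * S.d α * S.d η = Θ * (α * S.d η) := by
  calc α * S.d α * S.d η = α * S.conj α * η * S.d α := by
        rw [mul_assoc, (commute_of_even (S.deg_d 1 α hα) (S.deg_d 1 η hη) (by decide)).eq,
          ← mul_assoc, mul_conj_mul_eq hα e2]
    _ = α * S.conj α * (η * Θ) := by
        rw [mul_assoc, (commute_of_even hη (S.deg_d 1 α hα) (by decide)).eq, e1,
          (commute_of_even hΘ hη (by decide)).eq]
    _ = Θ * (α * S.d η) := by
        rw [← mul_assoc, mul_conj_mul_eq hα e2,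
          ((commute_of_even hα hΘ (by decide)).mul_left
            (commute_of_even (S.deg_d 1 η hη) hΘ (by decide))).eq]

theorem d_mul_mul_eq_zero (hα : S.deg 1 α) (hη : S.deg 1 η) (hΘ : S.deg 2 Θ)
    (e1 : S.d α * η = Θ * η) (e2 : S.d η = (α + S.conj α) * η) :
    S.d Θ * (α * η) = 0 := by
  calc S.d Θ * (α * η) = -(α * (S.d Θ * η)) := by
        rw [← mul_assoc, mul_eq_neg_mul_of_odd (S.deg_d 2 Θ hΘ) hα (by decide), neg_mul,
          mul_assoc]
    _ = 0 := by
        rw [d_mul_eq_d_mul_d_sub hα hΘ e1, mul_sub, ← mul_assoc, mul_d_mul_d_eq hα hη hΘ e1 e2,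
          ← mul_assoc α Θ, (commute_of_even hα hΘ (by decide)).eq, mul_assoc, sub_self,
          neg_zero]

theorem d_pow_mul_mul_eq (hα : S.deg 1 α) (hη : S.deg 1 η) (hΘ : S.deg 2 Θ)
    (e1 : S.d α * η = Θ * η) (e2 : S.d η = (α + S.conj α) * η) (j : ℕ) :
    S.d (Θ ^ j * (α * η)) = Θ ^ (j + 1) * η - Θ ^ j * (α * S.d η) := by
  rw [d_pow_mul_of_d_mul_eq_zero even_two hΘ (d_mul_mul_eq_zero hα hη hΘ e1 e2),
    d_mul_eq hα e1, mul_sub, ← mul_assoc, ← pow_succ]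

end FormCalculus

open FormCalculus

theorem stmt_15_general (S : FormCalculus) (n : ℕ) (hn : 2 ≤ n)
    (α Θ η : S.A) (hα : S.deg 1 α) (hΘ : S.deg 2 Θ)
    (hη : S.deg 1 η)
    (e1 : S.d α * η = Θ * η)
    (e2 : S.d η = (α + S.conj α) * η)
    (Ω : S.A)
    (hΩ : Ω = Complex.I • Θ - (1 / (n : ℂ)) • (Complex.I • (α * S.conj α))) :
    S.d (Ω ^ (n - 1) * ((Complex.I • α) * η))
      = ((n : ℂ) - 1) •
          (Ω ^ (n - 2) *
            ((1 / (n : ℂ)) •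
              ((Complex.I • Θ) * (Complex.I • (α * S.conj α)))) * η)
        + Ω ^ (n - 1) * ((Complex.I • Θ - Complex.I • (α * S.conj α)) * η) := by
  obtain ⟨m, rfl⟩ : ∃ m, n = m + 2 := ⟨n - 2, by omega⟩
  rw [show m + 2 - 1 = m + 1 from rfl, show m + 2 - 2 = m from rfl]
  set K := α * S.conj α
  set c : ℂ := -(Complex.I / ((m + 2 : ℕ) : ℂ)) with hc
  have hΩ' : Ω = Complex.I • Θ + c • K := by
    rw [hΩ, hc]
    module
  have hKη : K * η = α * S.d η := mul_conj_mul_eq hα e2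
  have hKαdη := mul_conj_mul_pow_mul_mul_d_eq_zero hα hη hΘ e2
  have hΩαη : Ω ^ (m + 1) * (α * η) = Complex.I ^ (m + 1) • (Θ ^ (m + 1) * (α * η)) := by
    rw [hΩ']
    simpa using smul_add_smul_pow_mul_of_mul_eq_zero Complex.I c
      (mul_conj_mul_pow_mul_mul_eq_zero hα hη hΘ e2) (m + 1) 0
  have hΩαdη : Ω ^ (m + 1) * (α * S.d η)
      = Complex.I ^ (m + 1) • (Θ ^ (m + 1) * (α * S.d η)) := by
    rw [hΩ']
    simpa using smul_add_smul_pow_mul_of_mul_eq_zero Complex.I c hKαdη (m + 1) 0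
  have hΩΘαdη : Ω ^ m * (Θ * (α * S.d η)) = Complex.I ^ m • (Θ ^ (m + 1) * (α * S.d η)) := by
    rw [hΩ']
    simpa using smul_add_smul_pow_mul_of_mul_eq_zero Complex.I c hKαdη m 1
  have hΩΘη : Ω ^ (m + 1) * (Θ * η) = Complex.I ^ (m + 1) • (Θ ^ (m + 2) * η)
      + (((m : ℂ) + 1) * Complex.I ^ m * c) • (Θ ^ (m + 1) * (α * S.d η)) := by
    rw [hΩ']
    simpa using smul_add_smul_pow_succ_mul Complex.I c (mul_conj_mul_pow_mul_eq hα hη hΘ e2)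
      hKαdη m 1
  rw [smul_mul_assoc, mul_smul_comm, hΩαη, S.d_smul, S.d_smul, d_pow_mul_mul_eq hα hη hΘ e1 e2]
  simp only [smul_mul_assoc, mul_smul_comm, smul_smul, mul_assoc, sub_mul, mul_sub, hKη]
  rw [hΩΘη, hΩαdη, hΩΘαdη, hc]
  match_scalars <;> field_simp
  ring

/-- On a `(2n+1)`-manifold with `n ≥ 2`, if
`dα ∧ η = Θ ∧ η` and `dη = (α + ᾱ) ∧ η`, then with
`Ω = iΘ − (1/n) iα ∧ ᾱ`,
`d(Ω^{n−1} ∧ iα ∧ η)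
  = (n−1) Ω^{n−2} ∧ (1/n) iΘ ∧ iα ∧ ᾱ ∧ η + Ω^{n−1} ∧ (iΘ − iα ∧ ᾱ) ∧ η`. -/
theorem stmt_15 (S : FormCalculus) (n : ℕ) (hn : 2 ≤ n)
    (α Θ η : S.A) (hα : S.deg 1 α) (hΘ : S.deg 2 Θ)
    (hη : S.deg 1 η) (hηreal : S.conj η = η)
    (e1 : S.d α * η = Θ * η)
    (e2 : S.d η = (α + S.conj α) * η)
    (Ω : S.A)
    (hΩ : Ω = Complex.I • Θ - (1 / (n : ℂ)) • (Complex.I • (α * S.conj α))) :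
    S.d (Ω ^ (n - 1) * ((Complex.I • α) * η))
      = ((n : ℂ) - 1) •
          (Ω ^ (n - 2) *
            ((1 / (n : ℂ)) •
              ((Complex.I • Θ) * (Complex.I • (α * S.conj α)))) * η)
        + Ω ^ (n - 1) * ((Complex.I • Θ - Complex.I • (α * S.conj α)) * η) :=
  stmt_15_general S n hn α Θ η hα hΘ hη e1 e2 Ω hΩ
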